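/- arXiv:2507.00859 — 8 statements merged into one kernel-verified Lean document; each statement's English description precedes it below -/
import Mathlib

section
/- Let K be a nonempty convex subset of a real Banach space X and S : K → K a map satisfying ‖Sx − Sy‖ ≤ L₀‖x−y‖ + ω(‖x−y‖) for all x,y ∈ K, where L₀ > 1 and ω is a modulus of continuity. Then for every ε ∈ (0,1) there exist δ ∈ (0,1) and a map T : K → K defined by Tx = δ·Sx + (1−δ)x such that T satisfies ‖Tx − Ty‖ ≤ (1+ε)‖x−y‖ + ω(‖x−y‖) for all x,y ∈ K, T has the same fixed point set as S, and inf_{x∈K}‖x − Tx‖ = δ·inf_{x∈K}‖x − Sx‖. -/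
/-!
Goebel's trick: the averaged map `T = δ S + (1 - δ) id` satisfies
`‖T x - T y‖ ≤ δ ‖S x - S y‖ + (1 - δ) ‖x - y‖ ≤ (1 + δ (L₀ - 1)) ‖x - y‖ + δ ω(‖x - y‖)`,
so `δ = ε / L₀` brings the Lipschitz constant down to `1 + ε`. Convexity keeps `T` a self-map of
`K`, and `x - T x = δ (x - S x)` gives both the fixed points and the minimal displacement.
-/

open Set Pointwise

section Module

variable {X : Type*} [AddCommGroup X] [Module ℝ X]

def averagedMap (δ : ℝ) (S : X → X) (x : X) : X := δ • S x + (1 - δ) • x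

theorem sub_averagedMap (δ : ℝ) (S : X → X) (x : X) :
    x - averagedMap δ S x = δ • (x - S x) := by
  rw [averagedMap, sub_smul, one_smul, smul_sub]; abel

theorem averagedMap_sub_averagedMap (δ : ℝ) (S : X → X) (x y : X) :
    averagedMap δ S x - averagedMap δ S y = δ • (S x - S y) + (1 - δ) • (x - y) := by
  simp only [averagedMap, smul_sub]; abel

theorem averagedMap_eq_self_iff {δ : ℝ} (hδ : δ ≠ 0) (S : X → X) (x : X) :
    averagedMap δ S x = x ↔ S x = x := by
  rw [eq_comm, ← sub_eq_zero, sub_averagedMap, smul_eq_zero_iff_right hδ, sub_eq_zero, eq_comm]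

theorem Convex.mapsTo_averagedMap {K : Set X} (hK : Convex ℝ K) {S : X → X}
    (hS : MapsTo S K K) {δ : ℝ} (hδ0 : 0 ≤ δ) (hδ1 : δ ≤ 1) :
    MapsTo (averagedMap δ S) K K :=
  fun _ hx => hK (hS hx) hx hδ0 (sub_nonneg.2 hδ1) (add_sub_cancel _ _)

end Module

section Normed

variable {X : Type*} [NormedAddCommGroup X] [NormedSpace ℝ X]

theorem norm_averagedMap_sub_le {δ : ℝ} (hδ0 : 0 ≤ δ) (hδ1 : δ ≤ 1) (S : X → X) (x y : X) :
    ‖averagedMap δ S x - averagedMap δ S y‖ ≤ δ * ‖S x - S y‖ + (1 - δ) * ‖x - y‖ := by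
  rw [averagedMap_sub_averagedMap]
  refine (norm_add_le _ _).trans_eq ?_
  rw [norm_smul, norm_smul, Real.norm_of_nonneg hδ0, Real.norm_of_nonneg (sub_nonneg.2 hδ1)]

theorem sInf_image_norm_sub_averagedMap {δ : ℝ} (hδ : 0 ≤ δ) (S : X → X) (K : Set X) :
    sInf ((fun x => ‖x - averagedMap δ S x‖) '' K) = δ * sInf ((fun x => ‖x - S x‖) '' K) := by
  have himage : (fun x => ‖x - averagedMap δ S x‖) '' K = δ • ((fun x => ‖x - S x‖) '' K) := by
    rw [← image_smul, image_image]
    refine image_congr fun x _ => ?_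
    rw [sub_averagedMap, norm_smul, Real.norm_of_nonneg hδ, smul_eq_mul]
  rw [himage, Real.sInf_smul_of_nonneg hδ, smul_eq_mul]

end Normed

theorem stmt4_general {X : Type*} [NormedAddCommGroup X] [NormedSpace ℝ X]
    (K : Set X) (hconv : Convex ℝ K)
    (S : X → X) (hS : Set.MapsTo S K K)
    (L₀ : ℝ) (hL₀ : 1 < L₀)
    (ω : ℝ → ℝ) (hωnn : ∀ t, 0 ≤ ω t)
    (hSlip : ∀ x ∈ K, ∀ y ∈ K, ‖S x - S y‖ ≤ L₀ * ‖x - y‖ + ω ‖x - y‖)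
    (ε : ℝ) (hε : ε ∈ Set.Ioo (0:ℝ) 1) :
    ∃ δ ∈ Set.Ioo (0:ℝ) 1, ∃ T : X → X,
      (∀ x, T x = δ • S x + (1 - δ) • x) ∧
      Set.MapsTo T K K ∧
      (∀ x ∈ K, ∀ y ∈ K, ‖T x - T y‖ ≤ (1 + ε) * ‖x - y‖ + ω ‖x - y‖) ∧
      {x ∈ K | T x = x} = {x ∈ K | S x = x} ∧
      sInf ((fun x => ‖x - T x‖) '' K) = δ * sInf ((fun x => ‖x - S x‖) '' K) := by
  obtain ⟨hε0, hε1⟩ := hε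
  have hL₀pos : 0 < L₀ := by linarith
  have hδ0 : 0 < ε / L₀ := div_pos hε0 hL₀pos
  have hδ1 : ε / L₀ < 1 := (div_lt_one hL₀pos).2 (by linarith)
  have hδL₀ : ε / L₀ * L₀ = ε := div_mul_cancel₀ ε hL₀pos.ne'
  refine ⟨ε / L₀, ⟨hδ0, hδ1⟩, averagedMap (ε / L₀) S, fun x => rfl,
    hconv.mapsTo_averagedMap hS hδ0.le hδ1.le, fun x hx y hy => ?_, ?_,
    sInf_image_norm_sub_averagedMap hδ0.le S K⟩
  · calc ‖averagedMap (ε / L₀) S x - averagedMap (ε / L₀) S y‖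
        ≤ ε / L₀ * ‖S x - S y‖ + (1 - ε / L₀) * ‖x - y‖ :=
          norm_averagedMap_sub_le hδ0.le hδ1.le S x y
      _ ≤ ε / L₀ * (L₀ * ‖x - y‖ + ω ‖x - y‖) + (1 - ε / L₀) * ‖x - y‖ := by
          gcongr; exact hSlip x hx y hy
      _ ≤ (1 + ε) * ‖x - y‖ + ω ‖x - y‖ := by
          nlinarith [norm_nonneg (x - y), hωnn ‖x - y‖]
  · ext x
    exact and_congr_right fun _ => averagedMap_eq_self_iff hδ0.ne' S x

/-- Proposition 3.4 / Goebel's trick: if `S : K → K` is `L₀`-`ω`-Lipschitz with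
`L₀ > 1` on a nonempty convex subset `K` of a Banach space, then for each `ε ∈ (0,1)` there
are `δ ∈ (0,1)` and a `(1+ε)`-`ω`-Lipschitz map `T x = δ • S x + (1-δ) • x` of `K` into `K`
with the same fixed point set and minimal displacement `d(T,K) = δ * d(S,K)`. -/
theorem stmt4 {X : Type*} [NormedAddCommGroup X] [NormedSpace ℝ X] [CompleteSpace X]
    (K : Set X) (hne : K.Nonempty) (hconv : Convex ℝ K)
    (S : X → X) (hS : Set.MapsTo S K K)
    (L₀ : ℝ) (hL₀ : 1 < L₀)
    (ω : ℝ → ℝ) (hωc : Continuous ω) (hω0 : ω 0 = 0) (hωnn : ∀ t, 0 ≤ ω t)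
    (hSlip : ∀ x ∈ K, ∀ y ∈ K, ‖S x - S y‖ ≤ L₀ * ‖x - y‖ + ω ‖x - y‖)
    (ε : ℝ) (hε : ε ∈ Set.Ioo (0:ℝ) 1) :
    ∃ δ ∈ Set.Ioo (0:ℝ) 1, ∃ T : X → X,
      (∀ x, T x = δ • S x + (1 - δ) • x) ∧
      Set.MapsTo T K K ∧
      (∀ x ∈ K, ∀ y ∈ K, ‖T x - T y‖ ≤ (1 + ε) * ‖x - y‖ + ω ‖x - y‖) ∧
      {x ∈ K | T x = x} = {x ∈ K | S x = x} ∧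
      sInf ((fun x => ‖x - T x‖) '' K) = δ * sInf ((fun x => ‖x - S x‖) '' K) :=
  stmt4_general K hconv S hS L₀ hL₀ ω hωnn hSlip ε hε
end

section
/- The function f(r) = r·|log₁₀(r^σ)| on [0,1] (with f(0)=0), where σ ∈ (0,1], satisfies |f(r) − f(s)| ≤ |r−s|·( (2σ)/ln 10 + |log₁₀|r−s|| ) for all r, s ∈ [0,1] with r ≠ s. In particular, ω_f(δ) ≤ δ(L + |log₁₀ δ|) for all δ ∈ (0,1], where L = 2/ln 10 < 1. -/
/-!
For `0 ≤ r ≤ 1` we have `r * |logb 10 (r ^ σ)| = σ / log 10 * negMulLog r`, so everything reduces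
to a modulus of continuity of `g = negMulLog` on `[0, 1]`. For `0 ≤ s ≤ r ≤ 1` and `h = r - s`,
`g r - g s ≤ g h` because `g` is subadditive, and `g s - g r ≤ h` because `x ↦ x + g x` is
monotone on `[0, 1]` (its derivative is `-log x ≥ 0`). Hence `|g r - g s| ≤ h + g h`, and the
monotonicity of `h ↦ h + g h` also gives the bound for `|r - s| ≤ δ`.
-/

open Real

lemma negMulLog_add_le {s h : ℝ} (hs : 0 ≤ s) (hh : 0 ≤ h) :
    negMulLog (s + h) ≤ negMulLog s + negMulLog h := by
  rcases hs.eq_or_lt with rfl | hs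
  · simp
  rcases hh.eq_or_lt with rfl | hh
  · simp
  have hls : log s ≤ log (s + h) := log_le_log hs (by linarith)
  have hlh : log h ≤ log (s + h) := log_le_log hh (by linarith)
  simp only [negMulLog]
  nlinarith

lemma monotoneOn_add_negMulLog : MonotoneOn (fun x ↦ x + negMulLog x) (Set.Icc 0 1) := by
  refine monotoneOn_of_deriv_nonneg (convex_Icc 0 1) (by fun_prop) ?_ ?_ <;>
    rw [interior_Icc]
  · exact fun x hx ↦ (differentiableAt_id.add
      (differentiableAt_negMulLog_iff.mpr hx.1.ne')).differentiableWithinAt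
  · intro x hx
    have hderiv : HasDerivAt (fun x ↦ x + negMulLog x) (1 + (-log x - 1)) x :=
      (hasDerivAt_id' x).add (hasDerivAt_negMulLog hx.1.ne')
    rw [hderiv.deriv]
    linarith [log_nonpos hx.1.le hx.2.le]

lemma abs_negMulLog_sub_le {r s : ℝ} (hr : r ∈ Set.Icc (0 : ℝ) 1) (hs : s ∈ Set.Icc (0 : ℝ) 1) :
    |negMulLog r - negMulLog s| ≤ |r - s| + negMulLog |r - s| := by
  wlog hsr : s ≤ r generalizing r s
  · rw [abs_sub_comm, abs_sub_comm r]
    exact this hs hr (le_of_not_ge hsr)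
  have hh : r - s ∈ Set.Icc (0 : ℝ) 1 := ⟨by linarith, by linarith [hs.1, hr.2]⟩
  rw [abs_of_nonneg hh.1, abs_le]
  constructor
  · have := monotoneOn_add_negMulLog hs hr hsr
    linarith [negMulLog_nonneg hh.1 hh.2]
  · have := negMulLog_add_le hh.1 hs.1
    rw [sub_add_cancel] at this
    linarith

lemma mul_abs_logb_eq_negMulLog_div {r : ℝ} (b : ℝ) (hr : r ∈ Set.Icc (0 : ℝ) 1) :
    r * |logb b r| = negMulLog r / |log b| := by
  rcases hr.1.eq_or_lt with rfl | hr0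
  · simp
  rw [logb, abs_div, abs_of_nonpos (log_nonpos hr0.le hr.2), negMulLog]
  ring

lemma mul_abs_logb_rpow_eq_negMulLog_div {r : ℝ} (b σ : ℝ) (hr : r ∈ Set.Icc (0 : ℝ) 1) :
    r * |logb b (r ^ σ)| = |σ| * (negMulLog r / |log b|) := by
  rcases hr.1.eq_or_lt with rfl | hr0
  · simp
  rw [logb_rpow_eq_mul_logb_of_pos hr0, abs_mul, mul_left_comm,
    mul_abs_logb_eq_negMulLog_div b hr]

lemma mul_div_add_abs_logb_eq {x : ℝ} (b c : ℝ) (hx : x ∈ Set.Icc (0 : ℝ) 1) :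
    x * (c / |log b| + |logb b x|) = (c * x + negMulLog x) / |log b| := by
  rw [mul_add, mul_abs_logb_eq_negMulLog_div b hx]
  ring

lemma abs_mul_abs_logb_rpow_sub_le {r s : ℝ} (b σ : ℝ) (hr : r ∈ Set.Icc (0 : ℝ) 1)
    (hs : s ∈ Set.Icc (0 : ℝ) 1) :
    abs (r * |logb b (r ^ σ)| - s * |logb b (s ^ σ)|)
      ≤ |σ| / |log b| * (|r - s| + negMulLog |r - s|) := by
  rw [mul_abs_logb_rpow_eq_negMulLog_div b σ hr, mul_abs_logb_rpow_eq_negMulLog_div b σ hs,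
    ← mul_div_assoc, ← mul_div_assoc, div_sub_div_same, ← mul_sub, mul_div_right_comm,
    abs_mul, abs_of_nonneg (by positivity)]
  exact mul_le_mul_of_nonneg_left (abs_negMulLog_sub_le hr hs) (by positivity)

/-- Example 4.1: the function `f r = r * |log₁₀ (r^σ)|` with `σ ∈ (0,1]`
satisfies `|f r - f s| ≤ |r-s| * (2σ/ln 10 + |log₁₀ |r-s||)` for distinct `r, s ∈ [0,1]`;
in particular `ω_f δ ≤ δ * (2/ln 10 + |log₁₀ δ|)` for `δ ∈ (0,1]`. -/
theorem stmt5 (σ : ℝ) (hσ : σ ∈ Set.Ioc (0:ℝ) 1) :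
    (∀ r ∈ Set.Icc (0:ℝ) 1, ∀ s ∈ Set.Icc (0:ℝ) 1, r ≠ s →
      abs (r * abs (Real.logb 10 (r ^ σ)) - s * abs (Real.logb 10 (s ^ σ)))
        ≤ abs (r - s) * (2 * σ / Real.log 10 + abs (Real.logb 10 (abs (r - s))))) ∧
    (∀ δ ∈ Set.Ioc (0:ℝ) 1, ∀ r ∈ Set.Icc (0:ℝ) 1, ∀ s ∈ Set.Icc (0:ℝ) 1, abs (r - s) ≤ δ →
      abs (r * abs (Real.logb 10 (r ^ σ)) - s * abs (Real.logb 10 (s ^ σ)))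
        ≤ δ * (2 / Real.log 10 + abs (Real.logb 10 δ))) := by
  obtain ⟨hσ0, hσ1⟩ := hσ
  have hlog : |log 10| = log 10 := abs_of_pos (log_pos (by norm_num))
  refine ⟨fun r hr s hs _ ↦ ?_, fun δ hδ r hr s hs hrsδ ↦ ?_⟩ <;>
    have hf := abs_mul_abs_logb_rpow_sub_le 10 σ hr hs <;>
    rw [abs_of_pos hσ0, hlog] at hf <;>
    have hh : |r - s| ∈ Set.Icc (0 : ℝ) 1 :=
      ⟨abs_nonneg _, abs_sub_le_of_nonneg_of_le hr.1 hr.2 hs.1 hs.2⟩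
  · calc _ ≤ σ / log 10 * (|r - s| + negMulLog |r - s|) := hf
      _ ≤ (2 * σ * |r - s| + negMulLog |r - s|) / log 10 := by
        rw [div_mul_eq_mul_div]
        gcongr
        nlinarith [negMulLog_nonneg hh.1 hh.2, hh.1]
      _ = _ := by rw [← hlog, mul_div_add_abs_logb_eq 10 _ hh]
  · have hδ' : δ ∈ Set.Icc (0 : ℝ) 1 := Set.Ioc_subset_Icc_self hδ
    calc _ ≤ σ / log 10 * (|r - s| + negMulLog |r - s|) := hf
      _ ≤ 1 / log 10 * (δ + negMulLog δ) :=
        mul_le_mul (by gcongr) (monotoneOn_add_negMulLog hh hδ' hrsδ)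
          (by linarith [negMulLog_nonneg hh.1 hh.2, hh.1]) (by positivity)
      _ ≤ (2 * δ + negMulLog δ) / log 10 := by
        rw [one_div_mul_eq_div]
        gcongr
        linarith [hδ'.1]
      _ = _ := by rw [← hlog, mul_div_add_abs_logb_eq 10 _ hδ']
end

section
/- The function f(r) = (1−r)·cos(r·|log₁₀ r|) on (0,1], extended by f(0) = 1, satisfies |f(r) − f(s)| ≤ |r−s|·( 1 + 2/ln 10 + |log₁₀|r−s|| ) for all distinct r, s ∈ [0,1]; i.e., f is 2-log-Lipschitz on [0,1]. -/
/-!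
With `g r = r * |log₁₀ r| = -(r * log r) / log 10` on `[0, 1]`, write
`(1 - r) cos (g r) - (1 - s) cos (g s) = (s - r) cos (g r) + (1 - s) (cos (g r) - cos (g s))`;
since `cos` is `1`-Lipschitz it remains to bound `|r log r - s log s|` by `t (1 + |log t|)` with
`t = |r - s|`. For `s < r` the increment `r log r - s log s` is at most `r - s` (by
`log (r / s) ≤ r / s - 1` and `log r ≤ 0`) and at least `t log t` (split `r = s + t` and use
monotonicity of `log`).
-/

open Real Set

lemma mul_log_le_mul_log_of_le {a b : ℝ} (ha : 0 ≤ a) (hab : a ≤ b) :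
    a * log a ≤ a * log b := by
  rcases ha.eq_or_lt with rfl | ha
  · simp
  · exact mul_le_mul_of_nonneg_left (log_le_log ha hab) ha.le

lemma mul_log_sub_mul_log_le_sub {r s : ℝ} (hs : 0 ≤ s) (hsr : s ≤ r) (hr : r ≤ 1) :
    r * log r - s * log s ≤ r - s := by
  have hlog_r : (r - s) * log r ≤ 0 :=
    mul_nonpos_of_nonneg_of_nonpos (by linarith) (log_nonpos (hs.trans hsr) hr)
  have hratio : s * (log r - log s) ≤ r - s := by
    rcases hs.eq_or_lt with rfl | hs
    · simpa using hsr
    · have hrs : log r - log s ≤ r / s - 1 := by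
        rw [← log_div (hs.trans_le hsr).ne' hs.ne']
        exact log_le_sub_one_of_pos (div_pos (hs.trans_le hsr) hs)
      calc s * (log r - log s) ≤ s * (r / s - 1) := mul_le_mul_of_nonneg_left hrs hs.le
        _ = r - s := by field_simp
  linarith

lemma mul_log_sub_mul_log_ge {r s : ℝ} (hs : 0 ≤ s) (hsr : s ≤ r) :
    (r - s) * log (r - s) ≤ r * log r - s * log s := by
  have h_s := mul_log_le_mul_log_of_le hs hsr
  have h_t := mul_log_le_mul_log_of_le (sub_nonneg.mpr hsr) (sub_le_self r hs)
  linarith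

lemma abs_mul_log_sub_mul_log_le {r s : ℝ} (hr : r ∈ Icc (0 : ℝ) 1)
    (hs : s ∈ Icc (0 : ℝ) 1) :
    |r * log r - s * log s| ≤ |r - s| * (1 + |log (|r - s|)|) := by
  wlog hsr : s ≤ r generalizing r s
  · rw [abs_sub_comm, abs_sub_comm r]
    exact this hs hr (le_of_not_ge hsr)
  have ht : 0 ≤ r - s := sub_nonneg.mpr hsr
  have h_abs_log : (r - s) * -|log (r - s)| ≤ (r - s) * log (r - s) :=
    mul_le_mul_of_nonneg_left (neg_abs_le _) ht
  have h_upper := mul_log_sub_mul_log_le_sub hs.1 hsr hr.2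
  have h_lower := mul_log_sub_mul_log_ge hs.1 hsr
  rw [abs_of_nonneg ht, abs_le]
  constructor <;> nlinarith [abs_nonneg (log (r - s))]

lemma mul_abs_logb_eq {b r : ℝ} (hb : 1 < b) (hr : r ∈ Icc (0 : ℝ) 1) :
    r * |logb b r| = -(r * log r) / log b := by
  have hlog_r : log r ≤ 0 := by
    rcases hr.1.eq_or_lt with rfl | h
    · simp
    · exact log_nonpos hr.1 hr.2
  rw [logb, abs_div, abs_of_nonpos hlog_r, abs_of_pos (log_pos hb)]
  ring

lemma abs_mul_abs_logb_sub_le {b r s : ℝ} (hb : 1 < b) (hr : r ∈ Icc (0 : ℝ) 1)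
    (hs : s ∈ Icc (0 : ℝ) 1) :
    |(r * |logb b r| - s * |logb b s|)| ≤ |r - s| * (1 + |log (|r - s|)|) / log b := by
  have hlog_b := log_pos hb
  rw [mul_abs_logb_eq hb hr, mul_abs_logb_eq hb hs, div_sub_div_same, abs_div,
    abs_of_pos hlog_b, neg_sub_neg, abs_sub_comm]
  exact div_le_div_of_nonneg_right (abs_mul_log_sub_mul_log_le hr hs) hlog_b.le

lemma abs_one_sub_mul_sub_one_sub_mul_le {r s x y : ℝ} (hs : s ∈ Icc (0 : ℝ) 1)
    (hx : |x| ≤ 1) :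
    |(1 - r) * x - (1 - s) * y| ≤ |r - s| + |x - y| := by
  have hsr : |(s - r) * x| ≤ |r - s| := by
    rw [abs_mul, abs_sub_comm]
    exact mul_le_of_le_one_right (abs_nonneg _) hx
  have hxy : |(1 - s) * (x - y)| ≤ |x - y| := by
    rw [abs_mul, abs_of_nonneg (sub_nonneg.mpr hs.2)]
    exact mul_le_of_le_one_left (abs_nonneg _) (by linarith [hs.1])
  calc |(1 - r) * x - (1 - s) * y| = |(s - r) * x + (1 - s) * (x - y)| := by ring_nf
    _ ≤ |r - s| + |x - y| := (abs_add_le _ _).trans (add_le_add hsr hxy)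

/-- Example 4.2: the function `f r = (1 - r) * cos (r * |log₁₀ r|)` (with the
convention `log₁₀ 0 = 0`, so `f 0 = 1`) satisfies
`|f r - f s| ≤ |r - s| * (1 + 2/ln 10 + |log₁₀ |r - s||)` for distinct `r, s ∈ [0,1]`,
i.e. `f` is `2`-log-Lipschitz on `[0,1]`. -/
theorem stmt6 :
    ∀ r ∈ Set.Icc (0:ℝ) 1, ∀ s ∈ Set.Icc (0:ℝ) 1, r ≠ s →
      abs ((1 - r) * Real.cos (r * abs (Real.logb 10 r))
          - (1 - s) * Real.cos (s * abs (Real.logb 10 s)))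
        ≤ abs (r - s) * (1 + 2 / Real.log 10 + abs (Real.logb 10 (abs (r - s)))) := by
  intro r hr s hs _
  have hlog_10 : 0 < log 10 := log_pos (by norm_num)
  calc |(1 - r) * cos (r * |logb 10 r|) - (1 - s) * cos (s * |logb 10 s|)|
      ≤ |r - s| + |cos (r * |logb 10 r|) - cos (s * |logb 10 s|)| :=
        abs_one_sub_mul_sub_one_sub_mul_le hs (abs_cos_le_one _)
    _ ≤ |r - s| + |(r * |logb 10 r| - s * |logb 10 s|)| :=
        add_le_add le_rfl (abs_cos_sub_cos_le _ _)
    _ ≤ |r - s| + |r - s| * (1 + |log (|r - s|)|) / log 10 :=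
        add_le_add le_rfl (abs_mul_abs_logb_sub_le (by norm_num) hr hs)
    _ = |r - s| * (1 + 1 / log 10 + |logb 10 (|r - s|)|) := by
        rw [logb, abs_div, abs_of_pos hlog_10]; ring
    _ ≤ |r - s| * (1 + 2 / log 10 + |logb 10 (|r - s|)|) := by gcongr; norm_num
end

section
/- Let T : B_{ℓ²} → B_{ℓ²} be Kakutani's map T(x) = √(1 − ‖x‖²₂)·e₁ + L·Rx, where L ∈ (0,1], e₁ is the first unit vector, and R is the right shift Rx = (0, x₁, x₂, …). Then ‖Tx − Ty‖₂ ≤ L‖x − y‖₂ + √(2‖x − y‖₂) for all x, y in the closed unit ball of ℓ². -/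
/-!
`Tx - Ty` splits into its first coordinate `c = √(1 - ‖x‖²) - √(1 - ‖y‖²)` and the tail
`L • R (x - y)`, whose norm is `L ‖x - y‖` because the shift is an isometry. The first coordinate
is controlled by `|√a - √b| ≤ √|a - b|` together with `|‖x‖² - ‖y‖²| ≤ 2 ‖x - y‖` on the unit ball.
-/

theorem Real.abs_sqrt_sub_sqrt_le_sqrt_abs_sub {a b : ℝ} (ha : 0 ≤ a) (hb : 0 ≤ b) :
    |√a - √b| ≤ √|a - b| := by
  apply Real.abs_le_sqrt
  calc (√a - √b) ^ 2 = |√a - √b| * |√a - √b| := by rw [← sq, sq_abs]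
    _ ≤ |√a - √b| * (√a + √b) := by
        gcongr
        calc |√a - √b| ≤ |√a| + |√b| := abs_sub _ _
          _ = √a + √b := by
              rw [abs_of_nonneg (Real.sqrt_nonneg a), abs_of_nonneg (Real.sqrt_nonneg b)]
    _ = |√a ^ 2 - √b ^ 2| := by
        rw [sq_sub_sq, abs_mul, abs_of_nonneg (add_nonneg (Real.sqrt_nonneg a) (Real.sqrt_nonneg b)),
          mul_comm]
    _ = |a - b| := by rw [Real.sq_sqrt ha, Real.sq_sqrt hb]

theorem abs_norm_sq_sub_norm_sq_le {E : Type*} [SeminormedAddCommGroup E] {x y : E}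
    (hx : ‖x‖ ≤ 1) (hy : ‖y‖ ≤ 1) : |‖x‖ ^ 2 - ‖y‖ ^ 2| ≤ 2 * ‖x - y‖ := by
  calc |‖x‖ ^ 2 - ‖y‖ ^ 2| = |‖x‖ - ‖y‖| * (‖x‖ + ‖y‖) := by
        rw [sq_sub_sq, abs_mul, abs_of_nonneg (by positivity), mul_comm]
    _ ≤ ‖x - y‖ * 2 := by
        gcongr
        · exact abs_norm_sub_norm_le x y
        · linarith
    _ = 2 * ‖x - y‖ := mul_comm _ _

theorem lp.norm_eq_of_shift {E : Type*} [NormedAddCommGroup E] {p : ENNReal} [Fact (1 ≤ p)]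
    (hp : 0 < p.toReal) {v w : lp (fun _ : ℕ => E) p} (h0 : v 0 = 0)
    (hsucc : ∀ n, v (n + 1) = w n) : ‖v‖ = ‖w‖ := by
  refine Real.rpow_left_injOn hp.ne' (norm_nonneg v) (norm_nonneg w) ?_
  show ‖v‖ ^ p.toReal = ‖w‖ ^ p.toReal
  rw [lp.norm_rpow_eq_tsum hp, lp.norm_rpow_eq_tsum hp,
    ((lp.memℓp v).summable hp).tsum_eq_zero_add]
  simp [h0, hsucc, Real.zero_rpow hp.ne']

/-- Example 4.6, Kakutani's map: if `Tx, Ty ∈ ℓ²` are the images of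
`x, y ∈ B_{ℓ²}` under `T z = √(1 - ‖z‖²) e₁ + L • R z` (written coordinatewise), then
`‖Tx - Ty‖ ≤ L ‖x - y‖ + √(2 ‖x - y‖)`. -/
theorem stmt10 (L : ℝ) (hL : L ∈ Set.Ioc (0:ℝ) 1)
    (x y Tx Ty : lp (fun _ : ℕ => ℝ) 2)
    (hx : ‖x‖ ≤ 1) (hy : ‖y‖ ≤ 1)
    (hTx0 : Tx 0 = Real.sqrt (1 - ‖x‖ ^ 2))
    (hTxs : ∀ n : ℕ, Tx (n + 1) = L * x n)
    (hTy0 : Ty 0 = Real.sqrt (1 - ‖y‖ ^ 2))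
    (hTys : ∀ n : ℕ, Ty (n + 1) = L * y n) :
    ‖Tx - Ty‖ ≤ L * ‖x - y‖ + Real.sqrt (2 * ‖x - y‖) := by
  set c := √(1 - ‖x‖ ^ 2) - √(1 - ‖y‖ ^ 2)
  have hc : |c| ≤ √(2 * ‖x - y‖) :=
    calc |c| ≤ √|(1 - ‖x‖ ^ 2) - (1 - ‖y‖ ^ 2)| :=
          Real.abs_sqrt_sub_sqrt_le_sqrt_abs_sub (by nlinarith [norm_nonneg x])
            (by nlinarith [norm_nonneg y])
      _ ≤ √(2 * ‖x - y‖) := by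
          rw [sub_sub_sub_cancel_left, abs_sub_comm]
          exact Real.sqrt_le_sqrt (abs_norm_sq_sub_norm_sq_le hx hy)
  have htail : ‖Tx - Ty - lp.single 2 0 c‖ = ‖L • (x - y)‖ := by
    apply lp.norm_eq_of_shift
    · norm_num
    · simp [hTx0, hTy0, c]
    · intro n
      rw [lp.coeFn_smul, lp.coeFn_sub, lp.coeFn_sub, lp.coeFn_sub]
      simp [hTxs, hTys, mul_sub]
  calc ‖Tx - Ty‖ ≤ ‖lp.single (E := fun _ : ℕ => ℝ) 2 0 c‖ + ‖Tx - Ty - lp.single 2 0 c‖ :=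
        norm_le_norm_add_norm_sub' _ _
    _ = |c| + L * ‖x - y‖ := by
        rw [htail, lp.norm_single (by norm_num), norm_smul, Real.norm_eq_abs, Real.norm_eq_abs,
          abs_of_pos hL.1]
    _ ≤ L * ‖x - y‖ + √(2 * ‖x - y‖) := by linarith
end

section
/- Let X be a real normed space with dim X ≥ 2, and ω : ℝ≥0 → ℝ≥0 a modulus of continuity with ω(1) = 0. Then a map T : B_X → B_X on the closed unit ball satisfies ‖Tx − Ty‖ ≤ ω(‖x − y‖) for all x, y ∈ B_X if and only if T is constant. -/
/-! A map on the unit ball with `ω 1 = 0` identifies any two points at distance `1`. In dimension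
at least two every point `x` of the ball lies at distance `1` from some unit vector `v`: the
distance from `x` to the sphere takes the values `1 - ‖x‖` and `1 + ‖x‖` at `±x / ‖x‖`, and the
sphere is connected. Since `v` is also at distance `1` from `0`, the map takes the same value
at `x` and at `0`. -/

open Metric

theorem exists_norm_eq_norm_sub_eq {X : Type*} [NormedAddCommGroup X] [NormedSpace ℝ X]
    (hdim : 1 < Module.rank ℝ X) {r : ℝ} (hr : 0 ≤ r) {x : X} (hx : ‖x‖ ≤ 2 * r) :
    ∃ v : X, ‖v‖ = r ∧ ‖x - v‖ = r := by
  have hsphere : IsPathConnected (sphere (0 : X) r) := isPathConnected_sphere hdim 0 hr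
  rcases eq_or_ne x 0 with rfl | hx0
  · obtain ⟨v, hv, -⟩ := hsphere
    rw [mem_sphere_zero_iff_norm] at hv
    exact ⟨v, hv, by rw [zero_sub, norm_neg, hv]⟩
  have hnx : 0 < ‖x‖ := norm_pos_iff.mpr hx0
  set u : X := (r / ‖x‖) • x
  have hu : ‖u‖ = r := by
    rw [norm_smul, Real.norm_of_nonneg (by positivity), div_mul_cancel₀ _ hnx.ne']
  have hxu : ‖x - u‖ = |‖x‖ - r| :=
    calc ‖x - u‖ = |1 - r / ‖x‖| * |‖x‖| := by
          rw [show x - u = (1 - r / ‖x‖) • x by rw [sub_smul, one_smul],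
            norm_smul, Real.norm_eq_abs, abs_norm]
      _ = |‖x‖ - r| := by rw [← abs_mul, sub_mul, one_mul, div_mul_cancel₀ _ hnx.ne']
  have hxu' : ‖x - -u‖ = ‖x‖ + r :=
    calc ‖x - -u‖ = |1 + r / ‖x‖| * ‖x‖ := by
          rw [show x - -u = (1 + r / ‖x‖) • x by rw [add_smul, one_smul, sub_neg_eq_add],
            norm_smul, Real.norm_eq_abs]
      _ = ‖x‖ + r := by
          rw [abs_of_nonneg (by positivity), add_mul, one_mul, div_mul_cancel₀ _ hnx.ne']
  obtain ⟨v, hv, hxv⟩ := hsphere.isConnected.isPreconnected.intermediate_value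
    (mem_sphere_zero_iff_norm.mpr hu) (mem_sphere_zero_iff_norm.mpr ((norm_neg u).trans hu))
    (continuous_const.sub continuous_id).norm.continuousOn
    (show r ∈ Set.Icc ‖x - u‖ ‖x - -u‖ by
      rw [hxu, hxu']; exact ⟨abs_sub_le_iff.mpr ⟨by linarith, by linarith⟩, by linarith⟩)
  exact ⟨v, mem_sphere_zero_iff_norm.mp hv, hxv⟩

theorem forall_eq_of_forall_norm_sub_eq_one {X Y : Type*} [NormedAddCommGroup X]
    [NormedSpace ℝ X] (hdim : 1 < Module.rank ℝ X) {f : X → Y}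
    (hf : ∀ x ∈ closedBall (0 : X) 1, ∀ y ∈ closedBall (0 : X) 1, ‖x - y‖ = 1 → f x = f y) :
    ∀ x ∈ closedBall (0 : X) 1, ∀ y ∈ closedBall (0 : X) 1, f x = f y := by
  have eq_zero : ∀ x ∈ closedBall (0 : X) 1, f x = f 0 := by
    intro x hx
    rw [mem_closedBall_zero_iff] at hx
    obtain ⟨v, hv, hxv⟩ := exists_norm_eq_norm_sub_eq hdim zero_le_one (x := x) (by linarith)
    have hvball : v ∈ closedBall (0 : X) 1 := mem_closedBall_zero_iff.mpr hv.le
    calc f x = f v := hf x (mem_closedBall_zero_iff.mpr hx) v hvball hxv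
      _ = f 0 := by
        refine (hf 0 (mem_closedBall_self zero_le_one) v hvball ?_).symm
        rw [zero_sub, norm_neg, hv]
  intro x hx y hy
  rw [eq_zero x hx, eq_zero y hy]

theorem stmt12_general {X : Type*} [NormedAddCommGroup X] [NormedSpace ℝ X]
    (hdim : 2 ≤ Module.rank ℝ X)
    (ω : ℝ → ℝ) (hωnn : ∀ t, 0 ≤ t → 0 ≤ ω t)
    (hω1 : ω 1 = 0)
    (T : X → X) :
    (∀ x ∈ Metric.closedBall (0:X) 1, ∀ y ∈ Metric.closedBall (0:X) 1,
        ‖T x - T y‖ ≤ ω ‖x - y‖) ↔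
      (∀ x ∈ Metric.closedBall (0:X) 1, ∀ y ∈ Metric.closedBall (0:X) 1, T x = T y) := by
  constructor
  · intro hT
    refine forall_eq_of_forall_norm_sub_eq_one (Cardinal.one_lt_two.trans_le hdim)
      fun x hx y hy hxy => ?_
    have : ‖T x - T y‖ ≤ 0 := by simpa only [hxy, hω1] using hT x hx y hy
    exact sub_eq_zero.mp (norm_le_zero_iff.mp this)
  · intro hT x hx y hy
    rw [hT x hx y hy, sub_self, norm_zero]
    exact hωnn _ (norm_nonneg _)

/-- Theorem 5.6: let `X` be a real normed space with `dim X ≥ 2` and `ω` a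
modulus of continuity with `ω 1 = 0`. A self-map `T` of the closed unit ball is
`ω`-nonexpansive iff it is constant on the ball. -/
theorem stmt12 {X : Type*} [NormedAddCommGroup X] [NormedSpace ℝ X]
    (hdim : 2 ≤ Module.rank ℝ X)
    (ω : ℝ → ℝ) (hωc : Continuous ω) (hωnn : ∀ t, 0 ≤ t → 0 ≤ ω t)
    (hω0 : ω 0 = 0) (hω1 : ω 1 = 0)
    (T : X → X) (hT : Set.MapsTo T (Metric.closedBall 0 1) (Metric.closedBall 0 1)) :
    (∀ x ∈ Metric.closedBall (0:X) 1, ∀ y ∈ Metric.closedBall (0:X) 1,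
        ‖T x - T y‖ ≤ ω ‖x - y‖) ↔
      (∀ x ∈ Metric.closedBall (0:X) 1, ∀ y ∈ Metric.closedBall (0:X) 1, T x = T y) :=
  stmt12_general hdim ω hωnn hω1 T
end

section
/- Let X be a real normed space of dimension ≥ 2 and let T : B_X → B_X satisfy ‖Tx − Ty‖ = 0 whenever ‖x − y‖ = 1. Then T is constant. -/
/-!
Every point `x` of the closed unit ball is at distance exactly `1` from some point `u` of the
unit sphere: the sphere is connected because the dimension is at least `2`, and along it
`‖x - u‖` takes the values `1 - ‖x‖` and `1 + ‖x‖` at the two points of the sphere on the line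
through `x`. Since `u` is also at distance `1` from `0`, this gives `T x = T u = T 0`.
-/

section

open Metric Set

variable {E : Type*} [NormedAddCommGroup E] [NormedSpace ℝ E]

theorem exists_mem_sphere_sameRay (x : E) {r : ℝ} (hr : 0 ≤ r)
    (hne : (sphere (0 : E) r).Nonempty) :
    ∃ a ∈ sphere (0 : E) r, SameRay ℝ x a := by
  rcases eq_or_ne x 0 with rfl | hx
  · obtain ⟨a, ha⟩ := hne
    exact ⟨a, ha, SameRay.zero_left a⟩
  · refine ⟨(r / ‖x‖) • x, ?_, SameRay.sameRay_nonneg_smul_right x (by positivity)⟩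
    rw [mem_sphere_zero_iff_norm, norm_smul, Real.norm_of_nonneg (by positivity),
      div_mul_cancel₀ r (norm_ne_zero_iff.mpr hx)]

theorem exists_mem_sphere_norm_sub_eq (hE : 1 < Module.rank ℝ E) {r t : ℝ} (hr : 0 ≤ r)
    (x : E) (ht : t ∈ Icc |‖x‖ - r| (‖x‖ + r)) :
    ∃ u ∈ sphere (0 : E) r, ‖x - u‖ = t := by
  have hconn := isPathConnected_sphere hE (0 : E) hr
  obtain ⟨a, ha, hxa⟩ := exists_mem_sphere_sameRay x hr hconn.nonempty
  have hna : ‖a‖ = r := mem_sphere_zero_iff_norm.mp ha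
  have hfar : ‖x - -a‖ = ‖x‖ + r := by rw [sub_neg_eq_add, hxa.norm_add, hna]
  have hnear : ‖x - a‖ = |‖x‖ - r| := by rw [hxa.norm_sub, hna]
  have hmem : t ∈ Icc ‖x - a‖ ‖x - -a‖ := by rwa [hnear, hfar]
  have hcont : ContinuousOn (fun u : E => ‖x - u‖) (sphere 0 r) := by fun_prop
  have hneg : -a ∈ sphere (0 : E) r := mem_sphere_zero_iff_norm.mpr (by rw [norm_neg, hna])
  exact hconn.isConnected.isPreconnected.intermediate_value ha hneg hcont hmem

end

theorem stmt13_general {X : Type*} [NormedAddCommGroup X] [NormedSpace ℝ X]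
    (hdim : 2 ≤ Module.rank ℝ X)
    (T : X → X)
    (h1 : ∀ x ∈ Metric.closedBall (0:X) 1, ∀ y ∈ Metric.closedBall (0:X) 1,
      ‖x - y‖ = 1 → T x = T y) :
    ∀ x ∈ Metric.closedBall (0:X) 1, ∀ y ∈ Metric.closedBall (0:X) 1, T x = T y := by
  have hrank : 1 < Module.rank ℝ X := lt_of_lt_of_le (by norm_num) hdim
  have hzero : (0 : X) ∈ Metric.closedBall (0 : X) 1 := Metric.mem_closedBall_self zero_le_one
  have eq_T_zero : ∀ x ∈ Metric.closedBall (0 : X) 1, T x = T 0 := by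
    intro x hx
    have hx1 : ‖x‖ ≤ 1 := mem_closedBall_zero_iff.mp hx
    have hx0 : 0 ≤ ‖x‖ := norm_nonneg x
    have h1mem : (1 : ℝ) ∈ Set.Icc |‖x‖ - 1| (‖x‖ + 1) :=
      ⟨abs_sub_le_iff.mpr ⟨by linarith, by linarith⟩, by linarith⟩
    obtain ⟨u, hu, hxu⟩ := exists_mem_sphere_norm_sub_eq hrank zero_le_one x h1mem
    have hu0 : ‖u - 0‖ = 1 := by rwa [sub_zero, ← mem_sphere_zero_iff_norm]
    have hu1 : u ∈ Metric.closedBall (0 : X) 1 := Metric.sphere_subset_closedBall hu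
    rw [h1 x hx u hu1 hxu, h1 u hu1 0 hzero hu0]
  intro x hx y hy
  rw [eq_T_zero x hx, eq_T_zero y hy]

/-- if `X` is a real normed space of dimension `≥ 2` and `T : B_X → B_X`
identifies any two points of the closed unit ball at distance exactly `1`, then `T` is
constant on the ball. -/
theorem stmt13 {X : Type*} [NormedAddCommGroup X] [NormedSpace ℝ X]
    (hdim : 2 ≤ Module.rank ℝ X)
    (T : X → X) (hT : Set.MapsTo T (Metric.closedBall 0 1) (Metric.closedBall 0 1))
    (h1 : ∀ x ∈ Metric.closedBall (0:X) 1, ∀ y ∈ Metric.closedBall (0:X) 1,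
      ‖x - y‖ = 1 → T x = T y) :
    ∀ x ∈ Metric.closedBall (0:X) 1, ∀ y ∈ Metric.closedBall (0:X) 1, T x = T y :=
  stmt13_general hdim T h1
end

section
/- Let K be the positive part of the closed unit ball of ℓ¹, i.e., K = { (tₙ) : tₙ ≥ 0, ∑ tₙ ≤ 1 }. If ω is a modulus of continuity with ω(1) = 0 and T : K → K satisfies ‖Tx − Ty‖₁ ≤ ω(‖x − y‖₁) for all x, y ∈ K, then T is constant. -/
/-!
Since `ω 1 = 0`, the map `T` identifies any two points of `K` at distance exactly `1`, so it
suffices to join every `x ∈ K` to `0` by a chain of such unit steps inside `K`. Pick a coordinate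
`N` with `x N ≤ ‖x‖ / 2` and put `c = 1 - ‖x‖ + 2 x N ∈ [0, 1]`; then
`x, c • e N, (c / 2) • e N + (1 - c / 2) • e (N + 1), 0` is such a chain, `e N` being the
`N`-th unit vector.
-/

theorem eq_of_norm_sub_eq_one {E F : Type*} [SeminormedAddGroup E] [NormedAddGroup F]
    {ω : ℝ → ℝ} (hω1 : ω 1 = 0) {S : Set E} {T : E → F}
    (hlip : ∀ x ∈ S, ∀ y ∈ S, ‖T x - T y‖ ≤ ω ‖x - y‖)
    {x y : E} (hx : x ∈ S) (hy : y ∈ S) (hxy : ‖x - y‖ = 1) : T x = T y := by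
  have h := hlip x hx y hy
  rw [hxy, hω1] at h
  exact sub_eq_zero.mp (norm_le_zero_iff.mp h)

namespace PosUnitBall

local notation "ℓ¹" => lp (fun _ : ℕ => ℝ) 1

theorem hasSum_abs (x : ℓ¹) : HasSum (fun n => |x n|) ‖x‖ := by
  simpa only [ENNReal.toReal_one, Real.rpow_one, Real.norm_eq_abs] using
    lp.hasSum_norm (p := 1) (by norm_num) x

theorem tsum_eq_norm_of_nonneg {x : ℓ¹} (hx : ∀ n, 0 ≤ x n) : ∑' n, x n = ‖x‖ := by
  simpa only [abs_of_nonneg (hx _)] using (hasSum_abs x).tsum_eq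

theorem norm_sub_single (x : ℓ¹) (N : ℕ) (c : ℝ) :
    ‖x - lp.single 1 N c‖ = ‖x‖ - |x N| + |x N - c| := by
  have hf : Function.update (fun n => |x n|) N |x N - c| =
      fun n => |(x - lp.single 1 N c : ℓ¹) n| := by
    ext n
    rcases eq_or_ne n N with rfl | hn
    · simp
    · simp [hn]
  have h := (hasSum_abs x).update N |x N - c|
  rw [hf, show |x N - c| - |x N| + ‖x‖ = ‖x‖ - |x N| + |x N - c| by ring] at h
  exact (hasSum_abs _).unique h

theorem norm_single_add_single {N Q : ℕ} (hNQ : N ≠ Q) (a b : ℝ) :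
    ‖lp.single (E := fun _ : ℕ => ℝ) 1 N a + lp.single 1 Q b‖ = |a| + |b| := by
  have h := norm_sub_single (lp.single (E := fun _ : ℕ => ℝ) 1 N a) Q (-b)
  rw [lp.single_neg, sub_neg_eq_add, lp.single_apply_ne _ _ _ hNQ.symm,
    lp.norm_single (by norm_num)] at h
  simpa using h

theorem exists_abs_apply_le_half_norm (x : ℓ¹) : ∃ N, |x N| ≤ ‖x‖ / 2 := by
  have h := sum_le_hasSum {0, 1} (fun n _ => abs_nonneg (x n)) (hasSum_abs x)
  rw [Finset.sum_pair zero_ne_one] at h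
  by_cases h0 : |x 0| ≤ |x 1|
  · exact ⟨0, by linarith⟩
  · exact ⟨1, by linarith⟩

def posUnitBall : Set ℓ¹ := {x | (∀ n, 0 ≤ x n) ∧ (∑' n, x n) ≤ 1}

theorem mem_posUnitBall_iff {x : ℓ¹} : x ∈ posUnitBall ↔ (∀ n, 0 ≤ x n) ∧ ‖x‖ ≤ 1 :=
  ⟨fun ⟨h0, h1⟩ => ⟨h0, tsum_eq_norm_of_nonneg h0 ▸ h1⟩,
    fun ⟨h0, h1⟩ => ⟨h0, (tsum_eq_norm_of_nonneg h0).symm ▸ h1⟩⟩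

theorem zero_mem_posUnitBall : (0 : ℓ¹) ∈ posUnitBall :=
  mem_posUnitBall_iff.mpr ⟨fun _ => le_rfl, by simp⟩

theorem single_add_single_mem_posUnitBall {N Q : ℕ} (hNQ : N ≠ Q) {a b : ℝ}
    (ha : 0 ≤ a) (hb : 0 ≤ b) (hab : a + b ≤ 1) :
    lp.single (E := fun _ : ℕ => ℝ) 1 N a + lp.single 1 Q b ∈ posUnitBall := by
  refine mem_posUnitBall_iff.mpr ⟨fun n => ?_, ?_⟩
  · simp only [lp.coeFn_add, Pi.add_apply, lp.single_apply, Pi.single_apply]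
    positivity
  · rwa [norm_single_add_single hNQ, abs_of_nonneg ha, abs_of_nonneg hb]

theorem single_mem_posUnitBall (N : ℕ) {c : ℝ} (h0 : 0 ≤ c) (h1 : c ≤ 1) :
    lp.single 1 N c ∈ posUnitBall := by
  simpa using single_add_single_mem_posUnitBall N.succ_ne_self.symm h0 le_rfl (by simpa)

theorem exists_unit_steps_to_zero {x : ℓ¹} (hx : x ∈ posUnitBall) :
    ∃ y ∈ posUnitBall, ∃ z ∈ posUnitBall, ‖x - y‖ = 1 ∧ ‖y - z‖ = 1 ∧ ‖z - 0‖ = 1 := by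
  obtain ⟨hx0, hx1⟩ := mem_posUnitBall_iff.mp hx
  obtain ⟨N, hN⟩ := exists_abs_apply_le_half_norm x
  rw [abs_of_nonneg (hx0 N)] at hN
  have hN0 := hx0 N
  set c := 1 - ‖x‖ + 2 * x N
  have hNN : N ≠ N + 1 := N.succ_ne_self.symm
  set z := lp.single (E := fun _ : ℕ => ℝ) 1 N (c / 2) + lp.single 1 (N + 1) (1 - c / 2)
  have hz : ‖z‖ = 1 := by
    rw [norm_single_add_single hNN, abs_of_nonneg (by linarith),
      abs_of_nonneg (by linarith)]
    ring
  have hzN : z N = c / 2 := by simp [z]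
  refine ⟨lp.single 1 N c, single_mem_posUnitBall N (by linarith) (by linarith),
    z, single_add_single_mem_posUnitBall hNN (by linarith) (by linarith) (by linarith),
    ?_, ?_, by rwa [sub_zero]⟩
  · rw [norm_sub_single, abs_of_nonneg hN0, abs_sub_comm, abs_of_nonneg (by linarith)]
    ring
  · rw [norm_sub_rev, norm_sub_single, hz, hzN, abs_of_nonneg (by linarith), abs_sub_comm,
      abs_of_nonneg (by linarith)]
    ring

end PosUnitBall

open PosUnitBall in
theorem stmt14_general (ω : ℝ → ℝ)
    (hω1 : ω 1 = 0)
    (K : Set (lp (fun _ : ℕ => ℝ) 1))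
    (hK : K = {x : lp (fun _ : ℕ => ℝ) 1 | (∀ n, 0 ≤ x n) ∧ (∑' n, x n) ≤ 1})
    (T : lp (fun _ : ℕ => ℝ) 1 → lp (fun _ : ℕ => ℝ) 1)
    (hlip : ∀ x ∈ K, ∀ y ∈ K, ‖T x - T y‖ ≤ ω ‖x - y‖) :
    ∀ x ∈ K, ∀ y ∈ K, T x = T y := by
  change K = posUnitBall at hK
  subst hK
  have hT0 : ∀ x ∈ posUnitBall, T x = T 0 := by
    intro x hx
    obtain ⟨y, hy, z, hz, hxy, hyz, hz0⟩ := exists_unit_steps_to_zero hx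
    rw [eq_of_norm_sub_eq_one hω1 hlip hx hy hxy, eq_of_norm_sub_eq_one hω1 hlip hy hz hyz,
      eq_of_norm_sub_eq_one hω1 hlip hz zero_mem_posUnitBall hz0]
  intro x hx y hy
  rw [hT0 x hx, hT0 y hy]

/-- Proposition 5.7, ℓ¹ case: let `K` be the positive part of the closed unit
ball of `ℓ¹`. If `ω` is a modulus of continuity with `ω 1 = 0` and `T : K → K` is
`ω`-nonexpansive, then `T` is constant on `K`. -/
theorem stmt14 (ω : ℝ → ℝ) (hωc : Continuous ω) (hωnn : ∀ t, 0 ≤ t → 0 ≤ ω t)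
    (hω0 : ω 0 = 0) (hω1 : ω 1 = 0)
    (K : Set (lp (fun _ : ℕ => ℝ) 1))
    (hK : K = {x : lp (fun _ : ℕ => ℝ) 1 | (∀ n, 0 ≤ x n) ∧ (∑' n, x n) ≤ 1})
    (T : lp (fun _ : ℕ => ℝ) 1 → lp (fun _ : ℕ => ℝ) 1)
    (hT : Set.MapsTo T K K)
    (hlip : ∀ x ∈ K, ∀ y ∈ K, ‖T x - T y‖ ≤ ω ‖x - y‖) :
    ∀ x ∈ K, ∀ y ∈ K, T x = T y :=
  stmt14_general ω hω1 K hK T hlip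
end

section
/- Let K be a bounded convex subset of a real Banach space and T : K → K satisfy ‖Tx − Ty‖ ≤ L‖x−y‖ + ω(‖x−y‖) for all x,y ∈ K, where L ∈ [0,1] and ω is a modulus of continuity such that δ ↦ ω(δ)/δ is nonincreasing on (0,1] and limsup_{δ→0} ω(δ)/δ ≤ 1 − L. Then T is nonexpansive: ‖Tx − Ty‖ ≤ ‖x − y‖ for all x, y ∈ K. -/
/-!
Once `ω d ≤ (1 - L) d` for `0 < d ≤ 1`, the hypothesis on `T` makes it nonexpansive on pairs at
distance at most `1`. On a convex set a map that is `C`-Lipschitz at small scales is `C`-Lipschitz: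
cut the segment from `x` to `y` into `n` equal pieces of length at most the scale and use the
triangle inequality along them.
-/

open Finset AffineMap

open scoped NNReal

theorem le_mul_of_div_antitone_of_limsup_le {ω : ℝ → ℝ} {c : ℝ}
    (hratio : ∀ a b : ℝ, 0 < a → a ≤ b → b ≤ 1 → ω b / b ≤ ω a / a)
    (hlimsup : ∀ ε > (0:ℝ), ∃ δ₀ > (0:ℝ), ∀ δ : ℝ, 0 < δ → δ < δ₀ → ω δ / δ ≤ c + ε)
    {d : ℝ} (hd : 0 < d) (hd1 : d ≤ 1) : ω d ≤ c * d := by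
  suffices ω d / d ≤ c by rwa [div_le_iff₀ hd] at this
  refine le_of_forall_pos_le_add fun ε hε => ?_
  obtain ⟨δ₀, hδ₀, hδ⟩ := hlimsup ε hε
  have hpos : 0 < min (δ₀ / 2) d := lt_min (half_pos hδ₀) hd
  calc ω d / d ≤ ω (min (δ₀ / 2) d) / min (δ₀ / 2) d := hratio _ _ hpos (min_le_right _ _) hd1
    _ ≤ c + ε := hδ _ hpos ((min_le_left _ _).trans_lt (half_lt_self hδ₀))

theorem Convex.lipschitzOnWith_of_local_dist_le_mul {E α : Type*} [NormedAddCommGroup E]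
    [NormedSpace ℝ E] [PseudoMetricSpace α] {K : Set E} (hK : Convex ℝ K) {f : E → α}
    {C : ℝ≥0} {r : ℝ} (hr : 0 < r)
    (hloc : ∀ x ∈ K, ∀ y ∈ K, dist x y ≤ r → dist (f x) (f y) ≤ C * dist x y) :
    LipschitzOnWith C f K := by
  refine LipschitzOnWith.of_dist_le_mul fun x hx y hy => ?_
  set n : ℕ := ⌈dist x y / r⌉₊ + 1
  have hn : (0 : ℝ) < n := by positivity
  let p : ℕ → E := fun i => lineMap x y ((i : ℝ) / n)
  have hp_mem : ∀ i ≤ n, p i ∈ K := fun i hi =>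
    hK.lineMap_mem hx hy ⟨by positivity, div_le_one_of_le₀ (by exact_mod_cast hi) hn.le⟩
  have hp_dist : ∀ i, dist (p i) (p (i + 1)) = dist x y / n := fun i => by
    rw [dist_lineMap_lineMap, Real.dist_eq, ← sub_div, Nat.cast_succ i, sub_add_cancel_left,
      abs_div, abs_neg, abs_one, abs_of_pos hn, one_div_mul_eq_div]
  have hpiece : dist x y / n ≤ r := by
    rw [div_le_iff₀ hn, ← div_le_iff₀' hr]
    exact (Nat.le_ceil _).trans (by simp [n])
  calc dist (f x) (f y) = dist (f (p 0)) (f (p n)) := by simp [p, hn.ne']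
    _ ≤ ∑ i ∈ range n, dist (f (p i)) (f (p (i + 1))) := dist_le_range_sum_dist (f ∘ p) n
    _ ≤ ∑ _i ∈ range n, C * (dist x y / n) := sum_le_sum fun i hi => by
      have hi : i < n := mem_range.mp hi
      rw [← hp_dist i]
      exact hloc _ (hp_mem i hi.le) _ (hp_mem (i + 1) hi) ((hp_dist i).trans_le hpiece)
    _ = C * dist x y := by rw [sum_const, card_range, nsmul_eq_mul]; field_simp

theorem stmt16_general {X : Type*} [NormedAddCommGroup X] [NormedSpace ℝ X]
    (K : Set X) (hconv : Convex ℝ K)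
    (T : X → X)
    (L : ℝ)
    (ω : ℝ → ℝ)
    (hratio : ∀ a b : ℝ, 0 < a → a ≤ b → b ≤ 1 → ω b / b ≤ ω a / a)
    (hlimsup : ∀ ε > (0:ℝ), ∃ δ₀ > (0:ℝ), ∀ δ : ℝ, 0 < δ → δ < δ₀ → ω δ / δ ≤ 1 - L + ε)
    (hlip : ∀ x ∈ K, ∀ y ∈ K, ‖T x - T y‖ ≤ L * ‖x - y‖ + ω ‖x - y‖) :
    ∀ x ∈ K, ∀ y ∈ K, ‖T x - T y‖ ≤ ‖x - y‖ := by
  have hloc : ∀ x ∈ K, ∀ y ∈ K, dist x y ≤ 1 → dist (T x) (T y) ≤ (1 : ℝ≥0) * dist x y := by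
    intro x hx y hy hxy
    simp only [NNReal.coe_one, one_mul, dist_eq_norm] at hxy ⊢
    rcases (norm_nonneg (x - y)).eq_or_lt with h0 | hpos
    · obtain rfl := sub_eq_zero.mp (norm_eq_zero.mp h0.symm)
      simp
    have hω := le_mul_of_div_antitone_of_limsup_le hratio hlimsup hpos hxy
    linarith [hlip x hx y hy]
  intro x hx y hy
  simpa [dist_eq_norm] using
    (hconv.lipschitzOnWith_of_local_dist_le_mul one_pos hloc).dist_le_mul x hx y hy

/-- Lemma 5.13-(iii): if `T : K → K` is `L`-`ω`-nonexpansive on a bounded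
convex set `K` with `L ∈ [0,1]`, `δ ↦ ω δ / δ` nonincreasing on `(0,1]` and
`limsup_{δ→0} ω δ / δ ≤ 1 - L`, then `T` is nonexpansive. -/
theorem stmt16 {X : Type*} [NormedAddCommGroup X] [NormedSpace ℝ X] [CompleteSpace X]
    (K : Set X) (hconv : Convex ℝ K) (hbdd : Bornology.IsBounded K)
    (T : X → X) (hT : Set.MapsTo T K K)
    (L : ℝ) (hL : L ∈ Set.Icc (0:ℝ) 1)
    (ω : ℝ → ℝ) (hωc : Continuous ω) (hωnn : ∀ t, 0 ≤ t → 0 ≤ ω t) (hω0 : ω 0 = 0)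
    (hratio : ∀ a b : ℝ, 0 < a → a ≤ b → b ≤ 1 → ω b / b ≤ ω a / a)
    (hlimsup : ∀ ε > (0:ℝ), ∃ δ₀ > (0:ℝ), ∀ δ : ℝ, 0 < δ → δ < δ₀ → ω δ / δ ≤ 1 - L + ε)
    (hlip : ∀ x ∈ K, ∀ y ∈ K, ‖T x - T y‖ ≤ L * ‖x - y‖ + ω ‖x - y‖) :
    ∀ x ∈ K, ∀ y ∈ K, ‖T x - T y‖ ≤ ‖x - y‖ :=
  stmt16_general K hconv T L ω hratio hlimsup hlip
end
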